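/- Let S be a finite set of s ≥ 2 points in a Euclidean space ℝ^ℓ, let δ > 2 and α > 0, and suppose that ‖i−i'‖² ≥ δ·α for every pair of distinct points i, i' ∈ S. Then for every point j ∈ ℝ^ℓ, one has Σ_{i∈S} ‖j−i‖² − (s−1)·α > 0 and min_{i∈S} ‖j−i‖² ≤ (δ/4)/(δ/2 − 1) · (Σ_{i∈S} ‖j−i‖² − (s−1)·α). -/

import Mathlib

/-!
Expanding `i - i' = (j - i') - (j - i)` gives
`∑_{i,i'} ‖i - i'‖² = 2 s ∑_i ‖j - i‖² - 2 ‖∑_i (j - i)‖²`, while separation bounds the left side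
below by `s (s - 1) δ α`. Hence `(s - 1) δ α ≤ 2 ∑_i ‖j - i‖²`, which gives both the positivity and,
together with `s · min_i ‖j - i‖² ≤ ∑_i ‖j - i‖²` and `s ≥ 2`, the bound on the minimum.
-/

open Finset

theorem Finset.card_mul_card_sub_one_mul_le_sum_sum {α : Type*} [DecidableEq α] (S : Finset α)
    (d : α → α → ℝ) (c : ℝ) (hdiag : ∀ i ∈ S, 0 ≤ d i i)
    (hsep : ∀ i ∈ S, ∀ i' ∈ S, i ≠ i' → c ≤ d i i') :
    #S * (#S - 1) * c ≤ ∑ i ∈ S, ∑ i' ∈ S, d i i' := by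
  have hrow : ∀ i ∈ S, (#S - 1) * c ≤ ∑ i' ∈ S, d i i' := by
    intro i hi
    have hcard : ((#(S.erase i) : ℕ) : ℝ) = #S - 1 := by
      rw [card_erase_of_mem hi, Nat.cast_pred (card_pos.mpr ⟨i, hi⟩)]
    have hoff : #(S.erase i) • c ≤ ∑ i' ∈ S.erase i, d i i' :=
      card_nsmul_le_sum _ _ _ fun i' hi' => hsep i hi i' (mem_of_mem_erase hi') (ne_of_mem_erase hi').symm
    rw [nsmul_eq_mul, hcard] at hoff
    rw [← add_sum_erase S _ hi]
    linarith [hdiag i hi]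
  have := card_nsmul_le_sum S _ _ hrow
  rwa [nsmul_eq_mul, ← mul_assoc] at this

section InnerProductSpace

variable {E : Type*} [NormedAddCommGroup E] [InnerProductSpace ℝ E]

theorem Finset.sum_sum_norm_sub_sq_eq (S : Finset E) (j : E) :
    ∑ i ∈ S, ∑ i' ∈ S, ‖i - i'‖ ^ 2
      = 2 * #S * ∑ i ∈ S, ‖j - i‖ ^ 2 - 2 * ‖∑ i ∈ S, (j - i)‖ ^ 2 := by
  have hterm : ∀ i i' : E,
      ‖i - i'‖ ^ 2 = ‖j - i'‖ ^ 2 - 2 * inner ℝ (j - i') (j - i) + ‖j - i‖ ^ 2 := by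
    intro i i'
    rw [show i - i' = (j - i') - (j - i) by abel, norm_sub_sq_real]
  rw [sum_congr rfl fun i _ => sum_congr rfl fun i' _ => hterm i i']
  simp only [sum_add_distrib, sum_sub_distrib, ← mul_sum, ← sum_inner, ← inner_sum,
    sum_const, nsmul_eq_mul, real_inner_self_eq_norm_sq]
  ring

theorem Finset.sum_sum_norm_sub_sq_le (S : Finset E) (j : E) :
    ∑ i ∈ S, ∑ i' ∈ S, ‖i - i'‖ ^ 2 ≤ 2 * #S * ∑ i ∈ S, ‖j - i‖ ^ 2 := by
  rw [sum_sum_norm_sub_sq_eq S j]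
  nlinarith [sq_nonneg ‖∑ i ∈ S, (j - i)‖]

theorem Finset.card_sub_one_mul_le_two_mul_sum_norm_sub_sq (S : Finset E) (hS : S.Nonempty)
    (c : ℝ) (hsep : ∀ i ∈ S, ∀ i' ∈ S, i ≠ i' → c ≤ ‖i - i'‖ ^ 2) (j : E) :
    (#S - 1) * c ≤ 2 * ∑ i ∈ S, ‖j - i‖ ^ 2 := by
  classical
  have hpairs := card_mul_card_sub_one_mul_le_sum_sum S (fun i i' => ‖i - i'‖ ^ 2) c
    (fun _ _ => by positivity) hsep
  have hcard : (0 : ℝ) < #S := by exact_mod_cast hS.card_pos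
  refine le_of_mul_le_mul_left ?_ hcard
  linarith [sum_sum_norm_sub_sq_le S j]

end InnerProductSpace

theorem Finset.card_mul_inf'_le_sum {α : Type*} (S : Finset α) (hS : S.Nonempty) (f : α → ℝ) :
    #S * S.inf' hS f ≤ ∑ i ∈ S, f i := by
  rw [← nsmul_eq_mul]
  exact card_nsmul_le_sum _ _ _ fun i hi => inf'_le f hi

open Finset in
/-- Refined Case B analysis: if `S` has `s ≥ 2` points pairwise at squared distance at
least `δ·α` with `δ > 2`, `α > 0`, then for every point `j`,
`Σ_{i∈S} ‖j−i‖² − (s−1)·α > 0` and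
`min_{i∈S} ‖j−i‖² ≤ (δ/4)/(δ/2−1) · (Σ_{i∈S} ‖j−i‖² − (s−1)·α)`. -/
theorem refined_caseB {ℓ : ℕ} (S : Finset (EuclideanSpace ℝ (Fin ℓ)))
    (s : ℕ) (hS : S.card = s) (hs : 2 ≤ s) (hSne : S.Nonempty)
    (δ α : ℝ) (hδ : δ > 2) (hα : α > 0)
    (hfar : ∀ i ∈ S, ∀ i' ∈ S, i ≠ i' → ‖i - i'‖ ^ 2 ≥ δ * α)
    (j : EuclideanSpace ℝ (Fin ℓ)) :
    (∑ i ∈ S, ‖j - i‖ ^ 2) - ((s : ℝ) - 1) * α > 0 ∧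
      S.inf' hSne (fun i => ‖j - i‖ ^ 2) ≤
        (δ / 4) / (δ / 2 - 1) * ((∑ i ∈ S, ‖j - i‖ ^ 2) - ((s : ℝ) - 1) * α) := by
  subst hS
  set D := ∑ i ∈ S, ‖j - i‖ ^ 2
  set m := S.inf' hSne (fun i => ‖j - i‖ ^ 2)
  have hs' : (2 : ℝ) ≤ #S := by exact_mod_cast hs
  have hsep : (#S - 1) * (δ * α) ≤ 2 * D :=
    card_sub_one_mul_le_two_mul_sum_norm_sub_sq S hSne _ hfar j
  have hm : 0 ≤ m := le_inf' hSne _ fun i _ => by positivity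
  have hmD : 2 * m ≤ D := by nlinarith [card_mul_inf'_le_sum S hSne fun i => ‖j - i‖ ^ 2]
  have hpos : 0 < D - (#S - 1) * α := by
    nlinarith [mul_pos (show (0 : ℝ) < #S - 1 by linarith) (mul_pos (sub_pos.mpr hδ) hα)]
  refine ⟨hpos, ?_⟩
  -- `δ/4 · (D - (s-1)α) ≥ δD/4 - D/2 = (δ/2 - 1) · D/2 ≥ (δ/2 - 1) · m`
  rw [div_mul_eq_mul_div, le_div_iff₀ (by linarith)]
  nlinarith [mul_nonneg (sub_nonneg.mpr hmD) (sub_pos.mpr hδ).le]
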